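/- For all m, n ≥ 2, the two-dimensional grid G(m,n) = P_m □ P_n admits an interval (2(m+n−3))-coloring; in particular W(G(m,n)) ≥ 2(m+n−3). -/

import Mathlib

open SimpleGraph

/-- `c` is an interval `t`-coloring of `G`: a proper edge-coloring with colors
`1,…,t`, every color used, and for each vertex the incident colors form an
interval of consecutive integers. -/
def IsIntervalColoring {V : Type*} (G : SimpleGraph V) (t : ℕ) (c : Sym2 V → ℕ) : Prop :=
  (∀ e ∈ G.edgeSet, c e ∈ Finset.Icc 1 t) ∧
  (∀ e₁ ∈ G.edgeSet, ∀ e₂ ∈ G.edgeSet, e₁ ≠ e₂ → (∃ v, v ∈ e₁ ∧ v ∈ e₂) → c e₁ ≠ c e₂) ∧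
  (∀ k ∈ Finset.Icc 1 t, ∃ e ∈ G.edgeSet, c e = k) ∧
  (∀ v : V, ∀ k₁ k₂ k : ℕ,
    (∃ e ∈ G.edgeSet, v ∈ e ∧ c e = k₁) → (∃ e ∈ G.edgeSet, v ∈ e ∧ c e = k₂) →
      k₁ ≤ k → k ≤ k₂ → ∃ e ∈ G.edgeSet, v ∈ e ∧ c e = k)

def HasIntervalColoring {V : Type*} (G : SimpleGraph V) (t : ℕ) : Prop :=
  ∃ c : Sym2 V → ℕ, IsIntervalColoring G t c

/-- `W G`: the greatest number of colors in an interval coloring of `G`. -/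
noncomputable def Wsup {V : Type*} (G : SimpleGraph V) : ℕ :=
  sSup {t | HasIntervalColoring G t}

/-- `w G`: the least number of colors in an interval coloring of `G`. -/
noncomputable def wlow {V : Type*} (G : SimpleGraph V) : ℕ :=
  sInf {t | HasIntervalColoring G t}

/-- The `n`-dimensional hypercube `Q_n`. -/
def hypercube (n : ℕ) : SimpleGraph (Fin n → Bool) where
  Adj u v := ∃! i, u i ≠ v i
  symm := ⟨by
    rintro u v ⟨i, hi, hu⟩
    exact ⟨i, fun h => hi h.symm, fun j hj => hu j fun h => hj h.symm⟩⟩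
  loopless := ⟨by rintro u ⟨i, hi, -⟩; exact hi rfl⟩



/-- Color of the edge between `u` and `v` in the grid. -/
def gcol (m n : ℕ) (u v : Fin m × Fin n) : ℕ :=
  if u.2 = v.2 then 2 * (min u.1.1 v.1.1 + max u.2.1 1)
  else 2 * (min (min u.1.1 v.1.1) (m - 2) + min u.2.1 v.2.1) + 1

lemma gcol_symm (m n : ℕ) (u v : Fin m × Fin n) : gcol m n u v = gcol m n v u := by
  unfold gcol
  by_cases h : u.2 = v.2
  · rw [if_pos h, if_pos h.symm]
    have := congrArg Fin.val h
    omega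
  · rw [if_neg h, if_neg (fun hh => h hh.symm)]
    omega

def gc (m n : ℕ) : Sym2 (Fin m × Fin n) → ℕ := Sym2.lift ⟨gcol m n, gcol_symm m n⟩

lemma gc_mk (m n : ℕ) (u v : Fin m × Fin n) : gc m n s(u, v) = gcol m n u v := rfl

lemma gkey {m n : ℕ} (v u : Fin m × Fin n)
    (h : (pathGraph m □ pathGraph n).Adj v u) :
    (u.1.1 + 1 = v.1.1 ∧ u.2.1 = v.2.1 ∧ gcol m n v u = 2 * (v.1.1 - 1 + max v.2.1 1)) ∨
    (v.1.1 + 1 = u.1.1 ∧ u.2.1 = v.2.1 ∧ gcol m n v u = 2 * (v.1.1 + max v.2.1 1)) ∨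
    (u.2.1 + 1 = v.2.1 ∧ u.1.1 = v.1.1 ∧ gcol m n v u = 2 * (min v.1.1 (m - 2) + v.2.1) - 1) ∨
    (v.2.1 + 1 = u.2.1 ∧ u.1.1 = v.1.1 ∧ gcol m n v u = 2 * (min v.1.1 (m - 2) + v.2.1) + 1) := by
  rw [boxProd_adj] at h
  rcases h with ⟨h1, h2⟩ | ⟨h1, h2⟩
  · rw [pathGraph_adj] at h1
    have hv : v.2.1 = u.2.1 := congrArg Fin.val h2
    unfold gcol
    rw [if_pos h2]
    rcases h1 with h1 | h1
    · exact Or.inr (Or.inl ⟨h1, hv.symm, by omega⟩)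
    · exact Or.inl ⟨h1, hv.symm, by omega⟩
  · rw [pathGraph_adj] at h1
    have hv : v.1.1 = u.1.1 := congrArg Fin.val h2
    have hne : v.2 ≠ u.2 := by
      intro hh
      have := congrArg Fin.val hh
      omega
    unfold gcol
    rw [if_neg hne]
    rcases h1 with h1 | h1
    · exact Or.inr (Or.inr (Or.inr ⟨h1, hv.symm, by omega⟩))
    · exact Or.inr (Or.inr (Or.inl ⟨h1, hv.symm, by omega⟩))

lemma gincident {V : Type*} {G : SimpleGraph V} {e : Sym2 V} {v : V}
    (he : e ∈ G.edgeSet) (hv : v ∈ e) : ∃ u, G.Adj v u ∧ e = s(v, u) := by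
  revert he hv
  refine Sym2.ind (fun a b he hv => ?_) e
  rw [Sym2.mem_iff] at hv
  rw [mem_edgeSet] at he
  rcases hv with rfl | rfl
  · exact ⟨b, he, rfl⟩
  · exact ⟨a, he.symm, Sym2.eq_swap⟩

lemma gspec {m n : ℕ} (hm : 2 ≤ m) (hn : 2 ≤ n) (v : Fin m × Fin n) (k : ℕ) :
    (∃ e ∈ (pathGraph m □ pathGraph n).edgeSet, v ∈ e ∧ gc m n e = k) ↔
    ((1 ≤ v.1.1 ∧ k = 2 * (v.1.1 - 1 + max v.2.1 1)) ∨
     (v.1.1 + 2 ≤ m ∧ k = 2 * (v.1.1 + max v.2.1 1)) ∨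
     (1 ≤ v.2.1 ∧ k = 2 * (min v.1.1 (m - 2) + v.2.1) - 1) ∨
     (v.2.1 + 2 ≤ n ∧ k = 2 * (min v.1.1 (m - 2) + v.2.1) + 1)) := by
  constructor
  · rintro ⟨e, he, hv, hc⟩
    obtain ⟨u, hadj, rfl⟩ := gincident he hv
    rw [gc_mk] at hc
    have hu1 := u.1.isLt
    have hu2 := u.2.isLt
    rcases gkey v u hadj with ⟨h1, h2, h3⟩ | ⟨h1, h2, h3⟩ | ⟨h1, h2, h3⟩ | ⟨h1, h2, h3⟩
    · exact Or.inl ⟨by omega, by omega⟩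
    · exact Or.inr (Or.inl ⟨by omega, by omega⟩)
    · exact Or.inr (Or.inr (Or.inl ⟨by omega, by omega⟩))
    · exact Or.inr (Or.inr (Or.inr ⟨by omega, by omega⟩))
  · intro h
    rcases h with ⟨h1, h2⟩ | ⟨h1, h2⟩ | ⟨h1, h2⟩ | ⟨h1, h2⟩
    · refine ⟨s(v, (⟨v.1.1 - 1, by omega⟩, v.2)), ?_, Sym2.mem_mk_left _ _, ?_⟩
      · rw [mem_edgeSet, boxProd_adj]
        exact Or.inl ⟨pathGraph_adj.mpr (Or.inr (by simp; omega)), rfl⟩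
      · rw [gc_mk]
        unfold gcol
        rw [if_pos rfl]
        simp only [Fin.val_mk]
        omega
    · refine ⟨s(v, (⟨v.1.1 + 1, by omega⟩, v.2)), ?_, Sym2.mem_mk_left _ _, ?_⟩
      · rw [mem_edgeSet, boxProd_adj]
        exact Or.inl ⟨pathGraph_adj.mpr (Or.inl (by simp)), rfl⟩
      · rw [gc_mk]
        unfold gcol
        rw [if_pos rfl]
        simp only [Fin.val_mk]
        omega
    · refine ⟨s(v, (v.1, ⟨v.2.1 - 1, by omega⟩)), ?_, Sym2.mem_mk_left _ _, ?_⟩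
      · rw [mem_edgeSet, boxProd_adj]
        exact Or.inr ⟨pathGraph_adj.mpr (Or.inr (by simp; omega)), rfl⟩
      · rw [gc_mk]
        unfold gcol
        rw [if_neg (by intro hh; have := congrArg Fin.val hh; simp only [Fin.val_mk] at this; omega)]
        simp only [Fin.val_mk]
        omega
    · refine ⟨s(v, (v.1, ⟨v.2.1 + 1, by omega⟩)), ?_, Sym2.mem_mk_left _ _, ?_⟩
      · rw [mem_edgeSet, boxProd_adj]
        exact Or.inr ⟨pathGraph_adj.mpr (Or.inl (by simp)), rfl⟩
      · rw [gc_mk]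
        unfold gcol
        rw [if_neg (by intro hh; have := congrArg Fin.val hh; simp only [Fin.val_mk] at this; omega)]
        simp only [Fin.val_mk]
        omega

lemma gproper {m n : ℕ} (v u₁ u₂ : Fin m × Fin n)
    (h1 : (pathGraph m □ pathGraph n).Adj v u₁) (h2 : (pathGraph m □ pathGraph n).Adj v u₂)
    (hne : u₁ ≠ u₂) : gcol m n v u₁ ≠ gcol m n v u₂ := by
  have hne' : u₁.1.1 ≠ u₂.1.1 ∨ u₁.2.1 ≠ u₂.2.1 := by
    by_contra hc
    push_neg at hc
    exact hne (Prod.ext_iff.mpr ⟨Fin.val_injective hc.1, Fin.val_injective hc.2⟩)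
  rcases gkey v u₁ h1 with ⟨a1, a2, a3⟩ | ⟨a1, a2, a3⟩ | ⟨a1, a2, a3⟩ | ⟨a1, a2, a3⟩ <;>
    rcases gkey v u₂ h2 with ⟨b1, b2, b3⟩ | ⟨b1, b2, b3⟩ | ⟨b1, b2, b3⟩ | ⟨b1, b2, b3⟩ <;>
    omega

theorem stmt8 (m n : ℕ) (hm : 2 ≤ m) (hn : 2 ≤ n) :
    HasIntervalColoring (pathGraph m □ pathGraph n) (2 * (m + n - 3)) ∧
    2 * (m + n - 3) ≤ Wsup (pathGraph m □ pathGraph n) := by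
  classical
  have hc : HasIntervalColoring (pathGraph m □ pathGraph n) (2 * (m + n - 3)) := by
    refine ⟨gc m n, ?_, ?_, ?_, ?_⟩
    · intro e he
      revert he
      refine Sym2.ind (fun a b he => ?_) e
      have h := (gspec hm hn a (gc m n s(a, b))).mp ⟨s(a, b), he, Sym2.mem_mk_left a b, rfl⟩
      have h1 := a.1.isLt
      have h2 := a.2.isLt
      rw [Finset.mem_Icc]
      omega
    · rintro e₁ he₁ e₂ he₂ hne ⟨v, hv₁, hv₂⟩
      obtain ⟨u₁, ha₁, rfl⟩ := gincident he₁ hv₁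
      obtain ⟨u₂, ha₂, rfl⟩ := gincident he₂ hv₂
      rw [gc_mk, gc_mk]
      refine gproper v u₁ u₂ ha₁ ha₂ (fun h => hne (by rw [h]))
    · intro k hk
      rw [Finset.mem_Icc] at hk
      rcases Nat.even_or_odd k with ⟨q, hq⟩ | ⟨q, hq⟩
      · by_cases hqm : q ≤ m - 1
        · obtain ⟨e, he, _, hce⟩ := (gspec hm hn (⟨q - 1, by omega⟩, ⟨0, by omega⟩) k).mpr
            (Or.inr (Or.inl ⟨by simp only [Fin.val_mk]; omega, by simp only [Fin.val_mk]; omega⟩))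
          exact ⟨e, he, hce⟩
        · obtain ⟨e, he, _, hce⟩ := (gspec hm hn (⟨m - 2, by omega⟩, ⟨q - (m - 2), by omega⟩) k).mpr
            (Or.inr (Or.inl ⟨by simp only [Fin.val_mk]; omega, by simp only [Fin.val_mk]; omega⟩))
          exact ⟨e, he, hce⟩
      · obtain ⟨e, he, _, hce⟩ := (gspec hm hn
            (⟨min q (m - 2), by omega⟩, ⟨q - min q (m - 2), by omega⟩) k).mpr
            (Or.inr (Or.inr (Or.inr ⟨by simp only [Fin.val_mk]; omega,
              by simp only [Fin.val_mk]; omega⟩)))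
        exact ⟨e, he, hce⟩
    · intro v k₁ k₂ k h₁ h₂ hle₁ hle₂
      rw [gspec hm hn] at h₁ h₂ ⊢
      have b1 := v.1.isLt
      have b2 := v.2.isLt
      omega
  refine ⟨hc, ?_⟩
  have hbdd : BddAbove {t | HasIntervalColoring (pathGraph m □ pathGraph n) t} := by
    refine ⟨Fintype.card (Sym2 (Fin m × Fin n)), ?_⟩
    rintro t ⟨c, _, _, hc3, _⟩
    have hsub : Finset.Icc 1 t ⊆ Finset.univ.image c := by
      intro k hk
      obtain ⟨e, _, hce⟩ := hc3 k hk
      exact Finset.mem_image.mpr ⟨e, Finset.mem_univ e, hce⟩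
    calc t = (Finset.Icc 1 t).card := by rw [Nat.card_Icc]; omega
      _ ≤ (Finset.univ.image c).card := Finset.card_le_card hsub
      _ ≤ Finset.univ.card := Finset.card_image_le
      _ = Fintype.card _ := Finset.card_univ
  exact le_csSup hbdd hc
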